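/- Let η₁, η₂, … be i.i.d. with E[η] = 0 and E[η²] = 1, indexed by primes, and define the truncated events A_{p,θ}(s) as above. Then for every θ > 0 and every M with M(s) → ∞, almost surely ∑_{p prime, p ≥ M(s)+1} |η_p| 1_{A_{p,θ}(s)} p^{-1/2-s} = 0 for all sufficiently small s > 0; in particular the limit as s → 0+ is 0 a.s. -/

import Mathlib

open MeasureTheory ProbabilityTheory Filter

/-- `g(s) = ∑_p p^{-1-2s}`, sum over primes. -/
noncomputable def primeG (s : ℝ) : ℝ :=
  ∑' p : Nat.Primes, ((p : ℕ) : ℝ) ^ (-(1 + 2 * s))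

/-- The truncation threshold
`θ (log log 1/s)^{-1} (p^{1+2s} g(s) / log log log 1/s)^{1/2}`. -/
noncomputable def thr (θ s : ℝ) (p : ℕ) : ℝ :=
  θ / Real.log (Real.log (1 / s)) *
    ((p : ℝ) ^ (1 + 2 * s) * primeG s / Real.log (Real.log (Real.log (1 / s)))) ^ (1 / 2 : ℝ)

/-!
By Borel–Cantelli, `E η² < ∞` gives `∑ P(η_k² > k) < ∞`, so almost surely `|η_k| ≤ C √k` for
every `k`. The threshold equals `θ √(p^{1+2s} g(s)) / h(s)`, and comparing the Euler product
`ζ(σ) ≤ exp (2 ∑_p p^{-σ})` with the pole `ζ(σ) ~ 1/(σ - 1)` gives `g(s) ≥ ½ log (1/s) - O(1)`,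
while `h(s)² = o(log (1/s))`. Hence for small `s` the threshold exceeds `C √p` at every prime
simultaneously, and every term of the sum vanishes.
-/

open Asymptotics Real Topology

noncomputable def natCastRpowNeg (σ : ℝ) (hσ : σ ≠ 0) : ℕ →*₀ ℝ where
  toFun n := (n : ℝ) ^ (-σ)
  map_zero' := by simpa using zero_rpow (neg_ne_zero.mpr hσ)
  map_one' := by simp
  map_mul' m n := by push_cast; exact mul_rpow (Nat.cast_nonneg m) (Nat.cast_nonneg n)

lemma inv_one_sub_le_exp_two_mul {x : ℝ} (h0 : 0 ≤ x) (h1 : x ≤ 1 / 2) :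
    (1 - x)⁻¹ ≤ exp (2 * x) := by
  rw [inv_le_iff_one_le_mul₀ (by linarith)]
  nlinarith [add_one_le_exp (2 * x)]

lemma sum_primesBelow_le_tsum {f : ℕ → ℝ} (hf : ∀ n, 0 ≤ f n)
    (hsum : Summable fun p : Nat.Primes => f p) (n : ℕ) :
    ∑ p ∈ n.primesBelow, f p ≤ ∑' p : Nat.Primes, f p := by
  have h : ∑ p ∈ n.primesBelow.subtype Nat.Prime, f p ≤ ∑' p : Nat.Primes, f p :=
    hsum.sum_le_tsum (L := SummationFilter.unconditional _) _ fun p _ => hf p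
  rwa [Finset.sum_subtype_eq_sum_filter,
    Finset.filter_true_of_mem fun p hp => Nat.prime_of_mem_primesBelow hp] at h

lemma tsum_nat_rpow_neg_le_exp {σ : ℝ} (hσ : 1 < σ) :
    ∑' n : ℕ, (n : ℝ) ^ (-σ) ≤ exp (2 * ∑' p : Nat.Primes, ((p : ℕ) : ℝ) ^ (-σ)) := by
  set f := natCastRpowNeg σ (by linarith)
  have hsum : Summable fun n => ‖f n‖ := by
    refine (summable_nat_rpow.mpr (by linarith : -σ < -1)).congr fun n => ?_
    exact (norm_of_nonneg (rpow_nonneg (Nat.cast_nonneg n) _)).symm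
  refine le_of_tendsto' (EulerProduct.eulerProduct_completely_multiplicative hsum) fun n => ?_
  have hf : ∀ p ∈ n.primesBelow, 0 ≤ f p ∧ f p ≤ 1 / 2 := fun p hp => by
    have hp2 : (2 : ℝ) ≤ p := by exact_mod_cast (Nat.prime_of_mem_primesBelow hp).two_le
    refine ⟨rpow_nonneg (Nat.cast_nonneg p) _, ?_⟩
    calc (p : ℝ) ^ (-σ) ≤ (p : ℝ) ^ (-1 : ℝ) :=
          rpow_le_rpow_of_exponent_le (by linarith) (by linarith)
      _ ≤ 1 / 2 := by rw [rpow_neg_one, one_div]; exact inv_anti₀ (by norm_num) hp2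
  calc ∏ p ∈ n.primesBelow, (1 - f p)⁻¹ ≤ ∏ p ∈ n.primesBelow, exp (2 * f p) :=
        Finset.prod_le_prod (fun p hp => inv_nonneg.mpr (by linarith [(hf p hp).2]))
          fun p hp => inv_one_sub_le_exp_two_mul (hf p hp).1 (hf p hp).2
    _ = exp (2 * ∑ p ∈ n.primesBelow, f p) := by rw [← exp_sum, Finset.mul_sum]
    _ ≤ exp (2 * ∑' p : Nat.Primes, ((p : ℕ) : ℝ) ^ (-σ)) := by
        gcongr
        exact sum_primesBelow_le_tsum (fun n => rpow_nonneg (Nat.cast_nonneg n) _)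
          (Nat.Primes.summable_rpow.mpr (by linarith)) n

lemma eventually_inv_le_tsum_nat_rpow_neg :
    ∀ᶠ σ in 𝓝[>] (1 : ℝ), (2 * (σ - 1))⁻¹ ≤ ∑' n : ℕ, (n : ℝ) ^ (-σ) := by
  filter_upwards [tendsto_sub_mul_tsum_nat_rpow.eventually
    (lt_mem_nhds (by norm_num : (1 / 2 : ℝ) < 1)), self_mem_nhdsWithin] with σ hσ (hσ1 : 1 < σ)
  simp_rw [rpow_neg (Nat.cast_nonneg _), ← one_div]
  rw [div_le_iff₀ (by linarith)]
  linarith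

lemma tendsto_one_add_two_mul_nhdsGT_zero :
    Tendsto (fun s : ℝ => 1 + 2 * s) (𝓝[>] 0) (𝓝[>] 1) := by
  refine tendsto_nhdsWithin_of_tendsto_nhds_of_eventually_within _ ?_ ?_
  · exact ((continuous_const.add (continuous_const.mul continuous_id)).tendsto' 0 1
      (by norm_num)).mono_left nhdsWithin_le_nhds
  · filter_upwards [self_mem_nhdsWithin] with s (hs : 0 < s)
    show 1 < 1 + 2 * s
    linarith

lemma eventually_log_one_div_le_two_mul_primeG :
    ∀ᶠ s in 𝓝[>] (0 : ℝ), log (1 / s) ≤ 2 * primeG s + log 4 := by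
  filter_upwards [tendsto_one_add_two_mul_nhdsGT_zero.eventually
    eventually_inv_le_tsum_nat_rpow_neg, self_mem_nhdsWithin] with s hζ (hs : 0 < s)
  rw [show 2 * (1 + 2 * s - 1) = 4 * s by ring] at hζ
  have hζ' : (4 * s)⁻¹ ≤ exp (2 * primeG s) :=
    hζ.trans (tsum_nat_rpow_neg_le_exp (by linarith))
  have := log_le_log (by positivity) hζ'
  rw [log_exp, log_inv, log_mul (by norm_num) hs.ne'] at this
  rw [one_div, log_inv]
  linarith

lemma tendsto_log_one_div_nhdsGT_zero : Tendsto (fun s : ℝ => log (1 / s)) (𝓝[>] 0) atTop :=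
  tendsto_log_atTop.comp (tendsto_inv_nhdsGT_zero.congr fun s => (one_div s).symm)

lemma tendsto_div_log_sq_mul_log_log_atTop :
    Tendsto (fun x : ℝ => x / (log x ^ 2 * log (log x))) atTop atTop := by
  have ho : (fun x : ℝ => log x ^ 2 * log (log x)) =o[atTop] id :=
    ((isBigO_refl (fun x : ℝ => log x ^ 2) atTop).mul_isLittleO
      (isLittleO_log_id_atTop.comp_tendsto tendsto_log_atTop)).trans
      (by simpa [pow_succ] using isLittleO_pow_log_id_atTop (n := 3))
  have hpos : ∀ᶠ x : ℝ in atTop, 0 < log x ^ 2 * log (log x) / id x := by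
    filter_upwards [tendsto_log_atTop.eventually_gt_atTop 1,
      (tendsto_log_atTop.comp tendsto_log_atTop).eventually_gt_atTop 0,
      eventually_gt_atTop 0] with x h1 h2 h3
    have : 0 < log (log x) := h2
    positivity
  refine (tendsto_nhdsWithin_iff.mpr
    ⟨ho.tendsto_div_nhds_zero, hpos⟩).inv_tendsto_nhdsGT_zero.congr fun x => ?_
  simp [inv_div]

lemma tendsto_primeG_div_atTop :
    Tendsto (fun s => primeG s / (log (log (1 / s)) ^ 2 * log (log (log (1 / s)))))
      (𝓝[>] 0) atTop := by
  have hx := tendsto_log_one_div_nhdsGT_zero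
  have hL2 := tendsto_log_atTop.comp hx
  refine tendsto_atTop_mono' _ ?_
    ((tendsto_div_log_sq_mul_log_log_atTop.comp hx).const_mul_atTop
      (by norm_num : (0 : ℝ) < 1 / 4))
  filter_upwards [eventually_log_one_div_le_two_mul_primeG, hx.eventually_ge_atTop (2 * log 4),
    hL2.eventually_gt_atTop 0, (tendsto_log_atTop.comp hL2).eventually_gt_atTop 0]
    with s hg hx4 (h2 : 0 < log (log (1 / s))) (h3 : 0 < log (log (log (1 / s))))
  rw [Function.comp_apply, ← mul_div_assoc]
  gcongr
  linarith

lemma thr_eq_mul_sqrt {θ s : ℝ} (p : ℕ) (hL2 : 0 < log (log (1 / s))) :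
    thr θ s p = θ * √((p : ℝ) ^ (1 + 2 * s) *
      (primeG s / (log (log (1 / s)) ^ 2 * log (log (log (1 / s)))))) := by
  rw [thr, ← sqrt_eq_rpow, show ∀ a b c d : ℝ, a * (b / (d ^ 2 * c)) = a * b / c / d ^ 2 by
    intros; ring, sqrt_div' _ (sq_nonneg _), sqrt_sq hL2.le]
  ring

lemma eventually_mul_sqrt_le_thr {θ : ℝ} (hθ : 0 < θ) (C : ℝ) :
    ∀ᶠ s in 𝓝[>] 0, ∀ p : ℕ, C * √(p : ℝ) ≤ thr θ s p := by
  filter_upwards [tendsto_primeG_div_atTop.eventually_ge_atTop ((C / θ) ^ 2),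
    (tendsto_log_atTop.comp tendsto_log_one_div_nhdsGT_zero).eventually_gt_atTop 0,
    self_mem_nhdsWithin] with s hR hL2 (hs : 0 < s) p
  rw [thr_eq_mul_sqrt p hL2]
  have hp : (p : ℝ) ≤ (p : ℝ) ^ (1 + 2 * s) := by
    rcases p.eq_zero_or_pos with rfl | hp
    · simp [zero_rpow (by linarith : 1 + 2 * s ≠ 0)]
    · exact self_le_rpow_of_one_le (by exact_mod_cast hp) (by linarith)
  calc C * √(p : ℝ) ≤ θ * √(p * (C / θ) ^ 2) := by
        rw [sqrt_mul (Nat.cast_nonneg p), sqrt_sq_eq_abs, abs_div, abs_of_pos hθ,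
          mul_left_comm, mul_div_cancel₀ _ hθ.ne', mul_comm]
        gcongr
        exact le_abs_self C
    _ ≤ θ * √((p : ℝ) ^ (1 + 2 * s) *
          (primeG s / (log (log (1 / s)) ^ 2 * log (log (log (1 / s)))))) := by
        gcongr

lemma ae_isBigO_sqrt_of_identDistrib {Ω : Type*} [MeasureSpace Ω]
    [IsProbabilityMeasure (ℙ : Measure Ω)] (X : ℕ → Ω → ℝ)
    (hident : ∀ i, IdentDistrib (X i) (X 0) ℙ ℙ) (hint : Integrable (fun ω => X 0 ω ^ 2)) :
    ∀ᵐ ω, (fun k => X k ω) =O[atTop] fun k : ℕ => √(k : ℝ) := by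
  have hfin : ∑' k : ℕ, ℙ {ω | X k ω ^ 2 ∈ Set.Ioi (k : ℝ)} ≠ ⊤ := by
    have hsq : ∀ k : ℕ,
        ℙ {ω | X k ω ^ 2 ∈ Set.Ioi (k : ℝ)} = ℙ {ω | X 0 ω ^ 2 ∈ Set.Ioi (k : ℝ)} := fun k =>
      ((hident k).comp (continuous_pow 2).measurable).measure_mem_eq measurableSet_Ioi
    rw [tsum_congr hsq]
    exact (tsum_prob_mem_Ioi_lt_top hint fun ω => sq_nonneg _).ne
  filter_upwards [ae_eventually_notMem hfin] with ω hω
  refine IsBigO.of_bound 1 (hω.mono fun k hk => ?_)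
  rw [one_mul, norm_of_nonneg (sqrt_nonneg _), Real.norm_eq_abs]
  exact abs_le_sqrt (not_lt.mp hk)

theorem truncated_tail_sum_eventually_zero_general {Ω : Type*} [MeasureSpace Ω]
    [IsProbabilityMeasure (ℙ : Measure Ω)]
    (η : ℕ → Ω → ℝ)
    (hident : ∀ i, IdentDistrib (η i) (η 0) ℙ ℙ)
    (hvar : ∫ ω, (η 0 ω) ^ 2 ∂(ℙ : Measure Ω) = 1)
    (θ : ℝ) (hθ : 0 < θ)
    (M : ℝ → ℕ) :
    ∀ᵐ ω ∂(ℙ : Measure Ω),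
      (∀ᶠ s : ℝ in nhdsWithin 0 (Set.Ioi 0),
        (∑' p : Nat.Primes,
          if M s + 1 ≤ (p : ℕ) ∧ thr θ s p < |η p ω| then
            |η p ω| * ((p : ℕ) : ℝ) ^ (-(1 / 2 + s))
          else 0) = 0) ∧
      Tendsto (fun s : ℝ =>
          ∑' p : Nat.Primes,
            if M s + 1 ≤ (p : ℕ) ∧ thr θ s p < |η p ω| then
              |η p ω| * ((p : ℕ) : ℝ) ^ (-(1 / 2 + s))
            else 0)
        (nhdsWithin 0 (Set.Ioi 0)) (nhds 0) := by
  have hint : Integrable (fun ω => η 0 ω ^ 2) := by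
    by_contra h
    rw [integral_undef h] at hvar
    exact zero_ne_one hvar
  filter_upwards [ae_isBigO_sqrt_of_identDistrib η hident hint] with ω hω
  obtain ⟨C, -, hC⟩ := bound_of_isBigO_nat_atTop hω
  have hzero : ∀ᶠ s : ℝ in 𝓝[>] 0, (∑' p : Nat.Primes,
      if M s + 1 ≤ (p : ℕ) ∧ thr θ s p < |η p ω| then
        |η p ω| * ((p : ℕ) : ℝ) ^ (-(1 / 2 + s))
      else 0) = 0 := by
    filter_upwards [eventually_mul_sqrt_le_thr hθ C] with s hs
    have hle : ∀ p : Nat.Primes, |η p ω| ≤ thr θ s p := fun p => by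
      have := hC (x := p) (sqrt_ne_zero'.mpr (by exact_mod_cast p.prop.pos))
      rw [Real.norm_eq_abs, norm_of_nonneg (sqrt_nonneg _)] at this
      exact this.trans (hs p)
    exact (tsum_congr fun p => if_neg fun h => h.2.not_ge (hle p)).trans tsum_zero
  exact ⟨hzero, tendsto_const_nhds.congr' (hzero.mono fun _ h => h.symm)⟩

/-- Lemma 3, relation (4.1): for every `θ > 0` and `M(s) → ∞`, almost surely
`∑_{p ≥ M(s)+1} |η_p| 1_{A_{p,θ}(s)} p^{-1/2-s} = 0` for all small `s > 0`;
in particular the sum tends to `0` a.s. as `s → 0+`. -/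
theorem truncated_tail_sum_eventually_zero {Ω : Type*} [MeasureSpace Ω]
    [IsProbabilityMeasure (ℙ : Measure Ω)]
    (η : ℕ → Ω → ℝ) (hmeas : ∀ i, Measurable (η i))
    (hindep : iIndepFun η ℙ)
    (hident : ∀ i, IdentDistrib (η i) (η 0) ℙ ℙ)
    (hmean : ∫ ω, η 0 ω ∂(ℙ : Measure Ω) = 0)
    (hvar : ∫ ω, (η 0 ω) ^ 2 ∂(ℙ : Measure Ω) = 1)
    (θ : ℝ) (hθ : 0 < θ)
    (M : ℝ → ℕ) (hM : Tendsto M (nhdsWithin 0 (Set.Ioi 0)) atTop) :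
    ∀ᵐ ω ∂(ℙ : Measure Ω),
      (∀ᶠ s : ℝ in nhdsWithin 0 (Set.Ioi 0),
        (∑' p : Nat.Primes,
          if M s + 1 ≤ (p : ℕ) ∧ thr θ s p < |η p ω| then
            |η p ω| * ((p : ℕ) : ℝ) ^ (-(1 / 2 + s))
          else 0) = 0) ∧
      Tendsto (fun s : ℝ =>
          ∑' p : Nat.Primes,
            if M s + 1 ≤ (p : ℕ) ∧ thr θ s p < |η p ω| then
              |η p ω| * ((p : ℕ) : ℝ) ^ (-(1 / 2 + s))
            else 0)
        (nhdsWithin 0 (Set.Ioi 0)) (nhds 0) :=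
  truncated_tail_sum_eventually_zero_general η hident hvar θ hθ M
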